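/- Let n be an even positive integer and let (a,b) be a type pair, i.e., a = w₁/(n/2) and b = w₂/(n/2) for integers 0 ≤ w₁, w₂ ≤ n/2. Let S ⊆ 𝔽₂ⁿ and ε ≥ 0 satisfy Σ_{e ∈ S} Q_{a,b}(e) ≤ ε, where Q_{a,b} is the binary symmetric channel distribution with crossover probability a on the first half and b on the second half. Then |S ∩ T_{(a,b)}^n| ≤ (n/2+1)² · ε · |T_{(a,b)}^n|; that is, the fraction of vectors of type (a,b) lying in S is at most (n/2+1)²·ε. -/

import Mathlib

open Real Set

/-- Binary entropy function (base 2), with `0 * log 0 = 0`. -/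
noncomputable def binH (x : ℝ) : ℝ := -(x * Real.logb 2 x) - (1 - x) * Real.logb 2 (1 - x)

/-- Binary Kullback–Leibler divergence (base 2). -/
noncomputable def binD (q p : ℝ) : ℝ :=
  q * Real.logb 2 (q / p) + (1 - q) * Real.logb 2 ((1 - q) / (1 - p))

/-- The error exponent `E(R,p₀,p₁)`:
`min_{q₀,q₁ ∈ [0,1]} [(D(q₁‖p₁)+D(q₀‖p₀))/2 + |1 − R − (H(q₀)+H(q₁))/2|⁺]`. -/
noncomputable def Eexp (R p0 p1 : ℝ) : ℝ :=
  sInf {v : ℝ | ∃ q0 ∈ Set.Icc (0:ℝ) 1, ∃ q1 ∈ Set.Icc (0:ℝ) 1,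
    v = (binD q1 p1 + binD q0 p0) / 2 + max (1 - R - (binH q0 + binH q1) / 2) 0}

/-- Binary vectors of length `n = k + k` (so `k = n/2` and `n` is even). -/
abbrev Vec (k : ℕ) := Fin (k + k) → ZMod 2

/-- First half `e⁽¹⁾` of `e ∈ 𝔽₂ⁿ`. -/
def firstHalf {k : ℕ} (e : Vec k) : Fin k → ZMod 2 := fun i => e (Fin.castAdd k i)

/-- Second half `e⁽²⁾` of `e ∈ 𝔽₂ⁿ`. -/
def secondHalf {k : ℕ} (e : Vec k) : Fin k → ZMod 2 := fun i => e (Fin.natAdd k i)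

/-- Hamming weight `w(x)`. -/
def wt {k : ℕ} (x : Fin k → ZMod 2) : ℕ := hammingNorm x

/-- The type of a half: its relative Hamming weight `w(x)/(n/2)`. -/
noncomputable def typeOf {k : ℕ} (x : Fin k → ZMod 2) : ℝ := (wt x : ℝ) / k

/-- The conditional entropy `H_c(e) = (H(type e⁽¹⁾) + H(type e⁽²⁾))/2`. -/
noncomputable def Hc {k : ℕ} (e : Vec k) : ℝ :=
  (binH (typeOf (firstHalf e)) + binH (typeOf (secondHalf e))) / 2

/-- The set `A_m`: linear subspaces of dimension `s = r + m` containing `C₁⊥`. -/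
def Am {k : ℕ} (C1perp : Submodule (ZMod 2) (Vec k)) (s : ℕ) :
    Set (Submodule (ZMod 2) (Vec k)) :=
  {C | Module.finrank (ZMod 2) C = s ∧ C1perp ≤ C}

/-- Uncorrectable errors `𝓔(C₂⊥)` under minimum conditional entropy decoding. -/
def errSet {k : ℕ} (C1perp C2perp : Submodule (ZMod 2) (Vec k)) : Set (Vec k) :=
  {e | ∃ ehat : Vec k, Hc ehat ≤ Hc e ∧
    e + ehat ∈ (C2perp : Set (Vec k)) \ (C1perp : Set (Vec k))}

/-- BSC probability `Q_{p₁′,p₀′}(e)`: crossover `p1'` on the first half and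
`p0'` on the second half. -/
noncomputable def bscProb {k : ℕ} (p1' p0' : ℝ) (e : Vec k) : ℝ :=
  p1' ^ wt (firstHalf e) * (1 - p1') ^ (k - wt (firstHalf e)) *
    (p0' ^ wt (secondHalf e) * (1 - p0') ^ (k - wt (secondHalf e)))

open Classical in
/-- Decoding error probability `P_err(C₂⊥, p₀′, p₁′)` of `C₂⊥` as part of a CSS code. -/
noncomputable def Perr {k : ℕ} (C1perp C2perp : Submodule (ZMod 2) (Vec k))
    (p0' p1' : ℝ) : ℝ :=
  ∑ e : Vec k, if e ∈ errSet C1perp C2perp then bscProb p1' p0' e else 0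

/-- The type class `T_{(a,b)}^n`. -/
def typeClass {k : ℕ} (a b : ℝ) : Set (Vec k) :=
  {e | typeOf (firstHalf e) = a ∧ typeOf (secondHalf e) = b}


/-! ### Auxiliary lemmas for `stmt16` -/

section Aux

lemma aux_step_up (k w j : ℕ) (hw : w ≤ k) (hj : j + 1 ≤ w) :
    k.choose j * w^j * (k-w)^(k-j) ≤ k.choose (j+1) * w^(j+1) * (k-w)^(k-(j+1)) := by
  have hjk : j < k := lt_of_lt_of_le hj hw
  have h1 : k.choose (j+1) * (j+1) = k.choose j * (k - j) := Nat.choose_succ_right_eq k j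
  have hpow : (k-w)^(k-j) = (k-w) * (k-w)^(k-(j+1)) := by
    rw [← pow_succ']; congr 1; omega
  rw [hpow, pow_succ]
  have key : k.choose j * (k - w) ≤ k.choose (j+1) * w := by
    have h2 : k.choose j * (k - w) * (j+1) ≤ k.choose (j+1) * w * (j+1) := by
      calc k.choose j * (k - w) * (j+1) ≤ k.choose j * ((k - j) * w) := by
            rw [mul_assoc]
            exact Nat.mul_le_mul_left _ (Nat.mul_le_mul (by omega) (by omega))
        _ = k.choose (j+1) * (j+1) * w := by rw [← mul_assoc, ← h1]
        _ = k.choose (j+1) * w * (j+1) := by ring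
    exact Nat.le_of_mul_le_mul_right h2 (by omega)
  calc k.choose j * w^j * ((k-w) * (k-w)^(k-(j+1)))
      = (k.choose j * (k-w)) * w^j * (k-w)^(k-(j+1)) := by ring
    _ ≤ (k.choose (j+1) * w) * w^j * (k-w)^(k-(j+1)) :=
        Nat.mul_le_mul_right _ (Nat.mul_le_mul_right _ key)
    _ = k.choose (j+1) * (w^j * w) * (k-w)^(k-(j+1)) := by ring

lemma aux_step_down (k w j : ℕ) (hw : w ≤ j) (hj : j + 1 ≤ k) :
    k.choose (j+1) * w^(j+1) * (k-w)^(k-(j+1)) ≤ k.choose j * w^j * (k-w)^(k-j) := by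
  have h1 : k.choose (j+1) * (j+1) = k.choose j * (k - j) := Nat.choose_succ_right_eq k j
  have hpow : (k-w)^(k-j) = (k-w) * (k-w)^(k-(j+1)) := by
    rw [← pow_succ']; congr 1; omega
  rw [hpow, pow_succ]
  have key : k.choose (j+1) * w ≤ k.choose j * (k - w) := by
    have h2 : k.choose (j+1) * w * (j+1) ≤ k.choose j * (k - w) * (j+1) := by
      calc k.choose (j+1) * w * (j+1) = k.choose (j+1) * (j+1) * w := by ring
        _ = k.choose j * (k - j) * w := by rw [h1]
        _ ≤ k.choose j * ((k - w) * (j+1)) := by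
            rw [mul_assoc]
            exact Nat.mul_le_mul_left _ (Nat.mul_le_mul (by omega) (by omega))
        _ = k.choose j * (k - w) * (j+1) := by ring
    exact Nat.le_of_mul_le_mul_right h2 (by omega)
  calc k.choose (j+1) * (w^j * w) * (k-w)^(k-(j+1))
      = (k.choose (j+1) * w) * w^j * (k-w)^(k-(j+1)) := by ring
    _ ≤ (k.choose j * (k-w)) * w^j * (k-w)^(k-(j+1)) :=
        Nat.mul_le_mul_right _ (Nat.mul_le_mul_right _ key)
    _ = k.choose j * w^j * ((k-w) * (k-w)^(k-(j+1))) := by ring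

lemma aux_term_le_max (k w : ℕ) (hw : w ≤ k) : ∀ j ≤ k,
    k.choose j * w^j * (k-w)^(k-j) ≤ k.choose w * w^w * (k-w)^(k-w) := by
  have A : ∀ d, ∀ j, j + d = w →
      k.choose j * w^j * (k-w)^(k-j) ≤ k.choose w * w^w * (k-w)^(k-w) := by
    intro d
    induction d with
    | zero =>
        intro j hj
        obtain rfl : j = w := by omega
        exact le_refl _
    | succ d ih =>
        intro j hj
        calc k.choose j * w^j * (k-w)^(k-j)
            ≤ k.choose (j+1) * w^(j+1) * (k-w)^(k-(j+1)) := aux_step_up k w j hw (by omega)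
          _ ≤ _ := ih (j+1) (by omega)
  have B : ∀ d, ∀ j, j = w + d → j ≤ k →
      k.choose j * w^j * (k-w)^(k-j) ≤ k.choose w * w^w * (k-w)^(k-w) := by
    intro d
    induction d with
    | zero => intro j hj _; subst hj; simp
    | succ d ih =>
        intro j hj hjk
        have hje : j = (w + d) + 1 := by omega
        subst hje
        calc k.choose (w+d+1) * w^(w+d+1) * (k-w)^(k-(w+d+1))
            ≤ k.choose (w+d) * w^(w+d) * (k-w)^(k-(w+d)) :=
              aux_step_down k w (w+d) (by omega) (by omega)
          _ ≤ _ := ih (w+d) rfl (by omega)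
  intro j hj
  rcases le_or_gt j w with h | h
  · exact A (w - j) j (by omega)
  · exact B (j - w) j (by omega) hj

lemma aux_sum_binom (k w : ℕ) (hw : w ≤ k) :
    k ^ k ≤ (k + 1) * (k.choose w * w^w * (k-w)^(k-w)) := by
  have h : k ^ k = ∑ j ∈ Finset.range (k+1), k.choose j * w^j * (k-w)^(k-j) := by
    have h0 : k = w + (k - w) := by omega
    calc k ^ k = (w + (k-w)) ^ k := by rw [← h0]
      _ = ∑ j ∈ Finset.range (k+1), w^j * (k-w)^(k-j) * k.choose j := add_pow w (k-w) k
      _ = ∑ j ∈ Finset.range (k+1), k.choose j * w^j * (k-w)^(k-j) := by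
          apply Finset.sum_congr rfl; intro j _; ring
  rw [h]
  calc ∑ j ∈ Finset.range (k+1), k.choose j * w^j * (k-w)^(k-j)
      ≤ ∑ _j ∈ Finset.range (k+1), k.choose w * w^w * (k-w)^(k-w) :=
        Finset.sum_le_sum fun j hj => aux_term_le_max k w hw j (by simp at hj; omega)
    _ = (k+1) * (k.choose w * w^w * (k-w)^(k-w)) := by
        rw [Finset.sum_const, Finset.card_range, smul_eq_mul]

lemma aux_one_sub (k w : ℕ) (hk : 0 < k) (hw : w ≤ k) :
    (1 : ℝ) - (w : ℝ) / k = ((k - w : ℕ) : ℝ) / k := by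
  have hk' : (k : ℝ) ≠ 0 := Nat.cast_ne_zero.mpr hk.ne'
  rw [Nat.cast_sub hw]
  field_simp

lemma aux_bridge (k w : ℕ) (hk : 0 < k) (hw : w ≤ k) :
    1 ≤ ((k : ℝ) + 1) * (k.choose w) * (((w : ℝ)/k)^w * (1 - (w : ℝ)/k)^(k-w)) := by
  have hk' : (0 : ℝ) < (k : ℝ) := Nat.cast_pos.mpr hk
  have hkk : (0 : ℝ) < (k : ℝ) ^ k := pow_pos hk' k
  rw [aux_one_sub k w hk hw, div_pow, div_pow, div_mul_div_comm, ← pow_add,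
    show w + (k - w) = k by omega]
  have hre : ((k : ℝ) + 1) * (k.choose w) * ((w : ℝ)^w * ((k - w : ℕ) : ℝ)^(k-w) / (k:ℝ)^k)
      = (((k : ℝ) + 1) * (k.choose w) * ((w : ℝ)^w * ((k - w : ℕ) : ℝ)^(k-w))) / (k:ℝ)^k := by
    ring
  rw [hre, le_div_iff₀ hkk]
  have hnat := aux_sum_binom k w hw
  have hcast : ((k ^ k : ℕ) : ℝ) ≤ (((k + 1) * (k.choose w * w^w * (k-w)^(k-w)) : ℕ) : ℝ) :=
    Nat.cast_le.mpr hnat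
  push_cast at hcast
  calc (1 : ℝ) * (k : ℝ) ^ k = (k : ℝ) ^ k := one_mul _
    _ ≤ ((k : ℝ) + 1) * ((k.choose w : ℝ) * (w : ℝ)^w * ((k - w : ℕ) : ℝ)^(k-w)) := hcast
    _ = ((k : ℝ) + 1) * (k.choose w) * ((w : ℝ)^w * ((k - w : ℕ) : ℝ)^(k-w)) := by ring

lemma zmod2_cases (a : ZMod 2) : a = 0 ∨ a = 1 := by
  revert a; decide

lemma card_wt (k w : ℕ) :
    (Finset.univ.filter (fun x : Fin k → ZMod 2 => wt x = w)).card = k.choose w := by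
  have hc : k.choose w = (Finset.powersetCard w (Finset.univ : Finset (Fin k))).card := by
    rw [Finset.card_powersetCard, Finset.card_univ, Fintype.card_fin]
  rw [hc]
  refine Finset.card_bij' (fun x _ => Finset.univ.filter (fun i => x i ≠ 0))
    (fun s _ => fun i => if i ∈ s then 1 else 0) ?hi ?hj ?li ?ri
  case hi =>
    intro x hx
    simp only [Finset.mem_filter, Finset.mem_univ, true_and] at hx
    simp only [Finset.mem_powersetCard]
    exact ⟨Finset.subset_univ _, hx⟩
  case hj =>
    intro s hs
    simp only [Finset.mem_powersetCard] at hs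
    simp only [Finset.mem_filter, Finset.mem_univ, true_and]
    rw [← hs.2, wt, hammingNorm]
    congr 1
    ext i
    by_cases h : i ∈ s <;> simp [h]
  case li =>
    intro x _
    funext i
    rcases zmod2_cases (x i) with h | h <;> simp [h]
  case ri =>
    intro s _
    ext i
    by_cases h : i ∈ s <;> simp [h]

noncomputable def halvesEquiv (k : ℕ) : Vec k ≃ (Fin k → ZMod 2) × (Fin k → ZMod 2) :=
  (Equiv.arrowCongr finSumFinEquiv.symm (Equiv.refl _)).trans
    (Equiv.sumArrowEquivProdArrow _ _ _)

lemma halvesEquiv_fst {k : ℕ} (e : Vec k) : (halvesEquiv k e).1 = firstHalf e := by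
  funext i
  simp [halvesEquiv, firstHalf, Equiv.sumArrowEquivProdArrow, Equiv.arrowCongr]

lemma halvesEquiv_snd {k : ℕ} (e : Vec k) : (halvesEquiv k e).2 = secondHalf e := by
  funext i
  simp [halvesEquiv, secondHalf, Equiv.sumArrowEquivProdArrow, Equiv.arrowCongr]

open Classical in
lemma card_typeClass' (k w1 w2 : ℕ) :
    Fintype.card {e : Vec k // wt (firstHalf e) = w1 ∧ wt (secondHalf e) = w2}
      = k.choose w1 * k.choose w2 := by
  have E1 : {e : Vec k // wt (firstHalf e) = w1 ∧ wt (secondHalf e) = w2}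
      ≃ {z : (Fin k → ZMod 2) × (Fin k → ZMod 2) // wt z.1 = w1 ∧ wt z.2 = w2} :=
    (halvesEquiv k).subtypeEquiv (fun e => by rw [halvesEquiv_fst, halvesEquiv_snd])
  have E2 : {z : (Fin k → ZMod 2) × (Fin k → ZMod 2) // wt z.1 = w1 ∧ wt z.2 = w2}
      ≃ {x : Fin k → ZMod 2 // wt x = w1} × {y : Fin k → ZMod 2 // wt y = w2} :=
    Equiv.subtypeProdEquivProd (p := fun x => wt x = w1) (q := fun y => wt y = w2)
  rw [Fintype.card_congr (E1.trans E2), Fintype.card_prod, Fintype.card_subtype,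
    Fintype.card_subtype, card_wt, card_wt]

lemma typeOf_eq_iff {k : ℕ} (hk : 0 < k) (x : Fin k → ZMod 2) (w : ℕ) :
    typeOf x = (w : ℝ) / k ↔ wt x = w := by
  have hk' : (k : ℝ) ≠ 0 := Nat.cast_ne_zero.mpr hk.ne'
  constructor
  · intro h
    rw [typeOf] at h
    field_simp at h
    exact_mod_cast h
  · intro h
    rw [typeOf, h]

end Aux

/-- if `Σ_{e ∈ S} Q_{a,b}(e) ≤ ε` for the type pair
`(a,b) = (w₁/(n/2), w₂/(n/2))`, then `|S ∩ T_{(a,b)}^n| ≤ (n/2+1)²·ε·|T_{(a,b)}^n|`. -/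
theorem stmt16 {k : ℕ} (hk : 0 < k) (w1 w2 : ℕ) (hw1 : w1 ≤ k) (hw2 : w2 ≤ k)
    (S : Set (Vec k)) (ε : ℝ) (hε : 0 ≤ ε)
    (hsum : ∑ᶠ e ∈ S, bscProb ((w1 : ℝ) / k) ((w2 : ℝ) / k) e ≤ ε) :
    ((S ∩ typeClass ((w1 : ℝ) / k) ((w2 : ℝ) / k)).ncard : ℝ) ≤
      ((k : ℝ) + 1) ^ 2 * ε *
        ((typeClass (k := k) ((w1 : ℝ) / k) ((w2 : ℝ) / k)).ncard : ℝ) := by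
  classical
  have hk' : (0 : ℝ) < (k : ℝ) := Nat.cast_pos.mpr hk
  set a : ℝ := (w1 : ℝ) / k with ha
  set b : ℝ := (w2 : ℝ) / k with hb
  set T : Set (Vec k) := typeClass a b with hT
  -- type class as weight condition
  have hTset : T = {e : Vec k | wt (firstHalf e) = w1 ∧ wt (secondHalf e) = w2} := by
    ext e
    simp only [hT, typeClass, Set.mem_setOf_eq, ha, hb,
      typeOf_eq_iff hk (firstHalf e) w1, typeOf_eq_iff hk (secondHalf e) w2]
  -- cardinality of the type class
  have hTcard : T.ncard = k.choose w1 * k.choose w2 := by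
    have h1 : T.ncard = Nat.card
        {e : Vec k // wt (firstHalf e) = w1 ∧ wt (secondHalf e) = w2} := by
      rw [Set.ncard, hTset]; rfl
    rw [h1, Nat.card_eq_fintype_card, card_typeClass']
  -- probabilities
  set qa : ℝ := a ^ w1 * (1 - a) ^ (k - w1) with hqa
  set qb : ℝ := b ^ w2 * (1 - b) ^ (k - w2) with hqb
  have haI : 0 ≤ a ∧ a ≤ 1 := ⟨by positivity, by rw [ha, div_le_one hk']; exact_mod_cast hw1⟩
  have hbI : 0 ≤ b ∧ b ≤ 1 := ⟨by positivity, by rw [hb, div_le_one hk']; exact_mod_cast hw2⟩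
  have hqa_pos : 0 < qa := by
    rw [hqa]
    have h1 : 0 < a ^ w1 := by
      rcases Nat.eq_zero_or_pos w1 with h | h
      · rw [h, pow_zero]; norm_num
      · exact pow_pos (by rw [ha]; positivity) _
    have h2 : 0 < (1 - a) ^ (k - w1) := by
      rcases eq_or_lt_of_le hw1 with h | h
      · rw [h, Nat.sub_self, pow_zero]; norm_num
      · apply pow_pos
        rw [ha, sub_pos, div_lt_one hk']
        exact_mod_cast h
    exact mul_pos h1 h2
  have hqb_pos : 0 < qb := by
    rw [hqb]
    have h1 : 0 < b ^ w2 := by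
      rcases Nat.eq_zero_or_pos w2 with h | h
      · rw [h, pow_zero]; norm_num
      · exact pow_pos (by rw [hb]; positivity) _
    have h2 : 0 < (1 - b) ^ (k - w2) := by
      rcases eq_or_lt_of_le hw2 with h | h
      · rw [h, Nat.sub_self, pow_zero]; norm_num
      · apply pow_pos
        rw [hb, sub_pos, div_lt_one hk']
        exact_mod_cast h
    exact mul_pos h1 h2
  have hbsc_nonneg : ∀ e : Vec k, 0 ≤ bscProb a b e := by
    intro e
    have := haI; have := hbI
    unfold bscProb
    have h1 : (0:ℝ) ≤ 1 - a := by linarith [haI.2]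
    have h2 : (0:ℝ) ≤ 1 - b := by linarith [hbI.2]
    have := haI.1; have := hbI.1
    positivity
  have hbsc_T : ∀ e ∈ T, bscProb a b e = qa * qb := by
    intro e he
    rw [hTset] at he
    obtain ⟨h1, h2⟩ := he
    rw [bscProb, h1, h2, hqa, hqb]
  -- sums
  have hfin : S.Finite := Set.toFinite S
  have hfinT : (S ∩ T).Finite := Set.toFinite _
  have hsum' : ∑ e ∈ hfin.toFinset, bscProb a b e ≤ ε := by
    rw [← hfin.coe_toFinset, finsum_mem_coe_finset] at hsum
    exact hsum
  have hsub : hfinT.toFinset ⊆ hfin.toFinset := by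
    intro e he
    rw [Set.Finite.mem_toFinset] at *
    exact he.1
  have hcard_sum : ((S ∩ T).ncard : ℝ) * (qa * qb) ≤ ε := by
    have h3 : ∑ e ∈ hfinT.toFinset, bscProb a b e
        = ((S ∩ T).ncard : ℝ) * (qa * qb) := by
      rw [Finset.sum_congr rfl (fun e he => hbsc_T e ((hfinT.mem_toFinset.mp he).2)),
        Finset.sum_const, Set.ncard_eq_toFinset_card _ hfinT, nsmul_eq_mul]
    calc ((S ∩ T).ncard : ℝ) * (qa * qb) = ∑ e ∈ hfinT.toFinset, bscProb a b e := h3.symm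
      _ ≤ ∑ e ∈ hfin.toFinset, bscProb a b e :=
          Finset.sum_le_sum_of_subset_of_nonneg hsub (fun i _ _ => hbsc_nonneg i)
      _ ≤ ε := hsum'
  -- bridge inequalities
  have key1 : 1 ≤ ((k : ℝ) + 1) * (k.choose w1) * qa := by
    have := aux_bridge k w1 hk hw1
    rw [hqa, ha]; exact this
  have key2 : 1 ≤ ((k : ℝ) + 1) * (k.choose w2) * qb := by
    have := aux_bridge k w2 hk hw2
    rw [hqb, hb]; exact this
  have h4 : 1 ≤ (((k : ℝ) + 1) * (k.choose w1) * qa) * (((k : ℝ) + 1) * (k.choose w2) * qb) := by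
    have := mul_le_mul key1 key2 zero_le_one (by linarith : (0:ℝ) ≤ ((k:ℝ)+1) * (k.choose w1) * qa)
    linarith
  have hcard_nonneg : (0:ℝ) ≤ ((S ∩ T).ncard : ℝ) := Nat.cast_nonneg _
  rw [hTcard]
  push_cast
  calc ((S ∩ T).ncard : ℝ)
      = ((S ∩ T).ncard : ℝ) * 1 := (mul_one _).symm
    _ ≤ ((S ∩ T).ncard : ℝ) *
        ((((k : ℝ) + 1) * (k.choose w1) * qa) * (((k : ℝ) + 1) * (k.choose w2) * qb)) :=
        mul_le_mul_of_nonneg_left h4 hcard_nonneg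
    _ = ((k : ℝ) + 1) ^ 2 * ((k.choose w1 : ℝ) * (k.choose w2 : ℝ)) *
        (((S ∩ T).ncard : ℝ) * (qa * qb)) := by ring
    _ ≤ ((k : ℝ) + 1) ^ 2 * ((k.choose w1 : ℝ) * (k.choose w2 : ℝ)) * ε := by
        apply mul_le_mul_of_nonneg_left hcard_sum (by positivity)
    _ = ((k : ℝ) + 1) ^ 2 * ε * ((k.choose w1 : ℝ) * (k.choose w2 : ℝ)) := by ring
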